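/- Let G̃ be the group presented by generators ξ₁, ξ₂, ξ₃, z with relations ξ₁³ = ξ₂³ = ξ₃³ = z³ = 1, z = [ξ₁,ξ₂] is central, ξ₂ = [ξ₁,ξ₃], and [ξ₂,ξ₃] = 1. Then G̃ has order 81. -/

import Mathlib

/-!
The relations say `ξ₂ ξ₁ = z⁻¹ ξ₁ ξ₂` and `ξ₃ ξ₁ = ξ₂⁻¹ ξ₁ ξ₃`, with `z` central and `ξ₂ ξ₃ = ξ₃ ξ₂`.
Hence the words `z ^ d * ξ₁ ^ a * ξ₂ ^ c * ξ₃ ^ b` are closed under right multiplication by the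
generators, and since the generators have order dividing 3, every element of `G̃` is such a word
with exponents in `ZMod 3`. Conversely, collecting products of these 81 words defines a group in
which the relations hold, and the induced homomorphism from `G̃` inverts the word map.
-/

namespace Stmt13

private def ξ₁ : FreeGroup (Fin 4) := FreeGroup.of 0
private def ξ₂ : FreeGroup (Fin 4) := FreeGroup.of 1
private def ξ₃ : FreeGroup (Fin 4) := FreeGroup.of 2
private def z : FreeGroup (Fin 4) := FreeGroup.of 3

/-- Relators: `ξ₁³ = ξ₂³ = ξ₃³ = z³ = 1`, `z = [ξ₁,ξ₂]` central,
`ξ₂ = [ξ₁,ξ₃]`, `[ξ₂,ξ₃] = 1`, where `[x,y] = x·y·x⁻¹·y⁻¹`. -/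
def rels : Set (FreeGroup (Fin 4)) :=
  {ξ₁ ^ 3, ξ₂ ^ 3, ξ₃ ^ 3, z ^ 3,
   z * (ξ₁ * ξ₂ * ξ₁⁻¹ * ξ₂⁻¹)⁻¹,
   z * ξ₁ * z⁻¹ * ξ₁⁻¹, z * ξ₂ * z⁻¹ * ξ₂⁻¹, z * ξ₃ * z⁻¹ * ξ₃⁻¹,
   ξ₂ * (ξ₁ * ξ₃ * ξ₁⁻¹ * ξ₃⁻¹)⁻¹,
   ξ₂ * ξ₃ * ξ₂⁻¹ * ξ₃⁻¹}

open scoped commutatorElement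

theorem _root_.Subgroup.induction_of_closure_eq_top_right_of_isOfFinOrder {G : Type*} [Group G]
    {s : Set G} {motive : G → Prop} (hs : Subgroup.closure s = ⊤)
    (hfin : ∀ x ∈ s, IsOfFinOrder x) (x : G) (one : motive 1)
    (mul_right : ∀ x, ∀ y ∈ s, motive x → motive (x * y)) : motive x := by
  refine Submonoid.induction_of_closure_eq_top_right ?_ x one mul_right
  rw [← Subgroup.closure_toSubmonoid_of_isOfFinOrder hfin, hs, Subgroup.top_toSubmonoid]

theorem _root_.pow_mul_eq_of_mul_eq_mul_mul {M : Type*} [Monoid M] {x y w : M}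
    (h : y * x = w * x * y) (hw : Commute w y) (n : ℕ) : y ^ n * x = w ^ n * x * y ^ n := by
  induction n with
  | zero => simp
  | succ n ih =>
    calc y ^ (n + 1) * x = y ^ n * (y * x) := by rw [pow_succ, mul_assoc]
      _ = w * (y ^ n * x) * y := by
        rw [h]; simp only [← mul_assoc]; rw [← (hw.pow_right n).eq]
      _ = w ^ (n + 1) * x * y ^ (n + 1) := by
        rw [mul_assoc w, ih, pow_succ', pow_succ]; simp only [mul_assoc]

/-- `⟨a, c, d, b⟩` stands for `z ^ d * ξ₁ ^ a * ξ₂ ^ c * ξ₃ ^ b`; the product is what collecting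
two such words into this form in `G̃` gives. -/
structure Model where
  a : ZMod 3
  c : ZMod 3
  d : ZMod 3
  b : ZMod 3
deriving DecidableEq, Fintype

namespace Model

instance : Mul Model := ⟨fun x y => ⟨x.a + y.a, x.c + y.c - x.b * y.a,
    x.d + y.d + x.b * (2 * y.a * (y.a + 1)) - x.c * y.a, x.b + y.b⟩⟩
instance : One Model := ⟨⟨0, 0, 0, 0⟩⟩
instance : Inv Model := ⟨fun x => ⟨-x.a, -x.c - x.a * x.b,
    -x.d - x.b * (2 * x.a * x.a + x.a) - x.c * x.a, -x.b⟩⟩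

theorem mul_def (x y : Model) : x * y = ⟨x.a + y.a, x.c + y.c - x.b * y.a,
    x.d + y.d + x.b * (2 * y.a * (y.a + 1)) - x.c * y.a, x.b + y.b⟩ := rfl

instance : Group Model where
  mul_assoc x y z := by
    have h3 : (3 : ZMod 3) = 0 := rfl
    simp only [mul_def, mk.injEq]
    exact ⟨by ring, by ring, by linear_combination (-(x.b * y.a * z.a)) * h3, by ring⟩
  one_mul := by decide
  mul_one := by decide
  inv_mul_cancel := by decide

theorem card : Nat.card Model = 81 := by
  rw [Nat.card_eq_fintype_card]; rfl

def gen : Fin 4 → Model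
  | 0 => ⟨1, 0, 0, 0⟩
  | 1 => ⟨0, 1, 0, 0⟩
  | 2 => ⟨0, 0, 0, 1⟩
  | 3 => ⟨0, 0, 1, 0⟩

theorem eq_gen_pow_mul (v : Model) :
    gen 3 ^ v.d.val * gen 0 ^ v.a.val * gen 1 ^ v.c.val * gen 2 ^ v.b.val = v := by
  revert v; decide

theorem lift_gen_rels : ∀ r ∈ rels, FreeGroup.lift gen r = 1 := by
  simp only [rels, Set.mem_insert_iff, Set.mem_singleton_iff, forall_eq_or_imp, forall_eq,
    ξ₁, ξ₂, ξ₃, z, map_mul, map_pow, map_inv, FreeGroup.lift_apply_of]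
  decide

end Model

local notation "G̃" => PresentedGroup rels

abbrev A : G̃ := PresentedGroup.mk rels ξ₁
abbrev B : G̃ := PresentedGroup.mk rels ξ₂
abbrev C : G̃ := PresentedGroup.mk rels ξ₃
abbrev Z : G̃ := PresentedGroup.mk rels z

theorem _root_.PresentedGroup.mk_pow_eq_one_of_mem {α : Type*} {rels : Set (FreeGroup α)}
    {x : FreeGroup α} {n : ℕ} (h : x ^ n ∈ rels) : PresentedGroup.mk rels x ^ n = 1 := by
  rw [← map_pow]; exact PresentedGroup.one_of_mem h

theorem _root_.PresentedGroup.commute_mk_of_mem {α : Type*} {rels : Set (FreeGroup α)}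
    {x y : FreeGroup α} (h : ⁅x, y⁆ ∈ rels) :
    Commute (PresentedGroup.mk rels x) (PresentedGroup.mk rels y) :=
  commutatorElement_eq_one_iff_commute.mp <| by
    rw [← map_commutatorElement]; exact PresentedGroup.one_of_mem h

theorem A_pow_three : A ^ 3 = 1 := PresentedGroup.mk_pow_eq_one_of_mem (by simp [rels])
theorem B_pow_three : B ^ 3 = 1 := PresentedGroup.mk_pow_eq_one_of_mem (by simp [rels])
theorem C_pow_three : C ^ 3 = 1 := PresentedGroup.mk_pow_eq_one_of_mem (by simp [rels])
theorem Z_pow_three : Z ^ 3 = 1 := PresentedGroup.mk_pow_eq_one_of_mem (by simp [rels])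

theorem commute_Z_A : Commute Z A :=
  PresentedGroup.commute_mk_of_mem (by simp [rels, commutatorElement_def])
theorem commute_Z_B : Commute Z B :=
  PresentedGroup.commute_mk_of_mem (by simp [rels, commutatorElement_def])
theorem commute_Z_C : Commute Z C :=
  PresentedGroup.commute_mk_of_mem (by simp [rels, commutatorElement_def])
theorem commute_B_C : Commute B C :=
  PresentedGroup.commute_mk_of_mem (by simp [rels, commutatorElement_def])

theorem B_mul_A : B * A = Z ^ 2 * A * B := by
  have hZ : Z = ⁅A, B⁆ := by
    rw [← map_commutatorElement]
    exact PresentedGroup.mk_eq_mk_of_mul_inv_mem (by simp [rels, commutatorElement_def])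
  have hZinv : Z⁻¹ = Z ^ 2 := inv_eq_of_mul_eq_one_right (by rw [← pow_succ', Z_pow_three])
  rw [← hZinv, hZ, commutatorElement_def]
  group

theorem C_mul_A : C * A = B ^ 2 * A * C := by
  have hB : B = ⁅A, C⁆ := by
    rw [← map_commutatorElement]
    exact PresentedGroup.mk_eq_mk_of_mul_inv_mem (by simp [rels, commutatorElement_def])
  have hBinv : B⁻¹ = B ^ 2 := inv_eq_of_mul_eq_one_right (by rw [← pow_succ', B_pow_three])
  rw [← hBinv, hB, commutatorElement_def]
  group

def word (a c d b : ℕ) : G̃ := Z ^ d * A ^ a * B ^ c * C ^ b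

theorem word_mul_A (a c d b : ℕ) :
    word a c d b * A = word (a + 1) (c + 2 * b) (d + 2 * (c + 2 * b)) b := by
  calc word a c d b * A = Z ^ d * A ^ a * B ^ c * ((B ^ 2) ^ b * A * C ^ b) := by
        rw [word, mul_assoc _ (C ^ b),
          pow_mul_eq_of_mul_eq_mul_mul C_mul_A (commute_B_C.pow_left 2)]
    _ = Z ^ d * A ^ a * (B ^ (c + 2 * b) * A) * C ^ b := by group
    _ = Z ^ d * (A ^ a * (Z ^ 2) ^ (c + 2 * b)) * A * B ^ (c + 2 * b) * C ^ b := by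
        rw [pow_mul_eq_of_mul_eq_mul_mul B_mul_A (commute_Z_B.pow_left 2)]; group
    _ = word (a + 1) (c + 2 * b) (d + 2 * (c + 2 * b)) b := by
        rw [((commute_Z_A.pow_left 2).pow_pow _ a).eq.symm, word]; group

theorem word_mul_B (a c d b : ℕ) : word a c d b * B = word a (c + 1) d b := by
  rw [word, mul_assoc, ← (commute_B_C.pow_right b).eq, word]; group

theorem word_mul_C (a c d b : ℕ) : word a c d b * C = word a c d (b + 1) := by
  rw [word, word]; group

theorem word_mul_Z (a c d b : ℕ) : word a c d b * Z = word a c (d + 1) b := by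
  have hZ : Commute Z (A ^ a * B ^ c * C ^ b) :=
    ((commute_Z_A.pow_right a).mul_right (commute_Z_B.pow_right c)).mul_right
      (commute_Z_C.pow_right b)
  calc word a c d b * Z = Z ^ d * (A ^ a * B ^ c * C ^ b * Z) := by simp only [word, mul_assoc]
    _ = word a c (d + 1) b := by rw [← hZ.eq, word]; group

theorem exists_eq_word (x : G̃) : ∃ a c d b, x = word a c d b := by
  have of_pow_three (i : Fin 4) : PresentedGroup.of (rels := rels) i ^ 3 = 1 := by
    fin_cases i
    exacts [A_pow_three, B_pow_three, C_pow_three, Z_pow_three]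
  induction x using Subgroup.induction_of_closure_eq_top_right_of_isOfFinOrder
    (PresentedGroup.closure_range_of rels) with
  | hfin y hy =>
    obtain ⟨i, rfl⟩ := hy
    exact isOfFinOrder_iff_pow_eq_one.mpr ⟨3, by norm_num, of_pow_three i⟩
  | one => exact ⟨0, 0, 0, 0, by simp [word]⟩
  | mul_right x _ hy ih =>
    obtain ⟨i, rfl⟩ := hy
    obtain ⟨a, c, d, b, rfl⟩ := ih
    fin_cases i
    exacts [⟨_, _, _, _, word_mul_A a c d b⟩, ⟨_, _, _, _, word_mul_B a c d b⟩,
      ⟨_, _, _, _, word_mul_C a c d b⟩, ⟨_, _, _, _, word_mul_Z a c d b⟩]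

def ofModel (v : Model) : G̃ := word v.a.val v.c.val v.d.val v.b.val

theorem ofModel_surjective : Function.Surjective ofModel := by
  intro x
  obtain ⟨a, c, d, b, rfl⟩ := exists_eq_word x
  refine ⟨⟨a, c, d, b⟩, ?_⟩
  simp only [ofModel, word, ZMod.val_natCast]
  rw [← pow_eq_pow_mod a A_pow_three, ← pow_eq_pow_mod c B_pow_three,
    ← pow_eq_pow_mod d Z_pow_three, ← pow_eq_pow_mod b C_pow_three]

def toModel : G̃ →* Model := PresentedGroup.toGroup Model.lift_gen_rels

theorem leftInverse_toModel_ofModel : Function.LeftInverse toModel ofModel := by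
  intro v
  have (i : Fin 4) : toModel (PresentedGroup.of i) = Model.gen i :=
    PresentedGroup.toGroup.of Model.lift_gen_rels
  simp only [ofModel, word, map_mul, map_pow]
  rw [show toModel A = _ from this 0, show toModel B = _ from this 1,
    show toModel C = _ from this 2, show toModel Z = _ from this 3]
  exact Model.eq_gen_pow_mul v

theorem card_presented_eq_81 : Nat.card (PresentedGroup rels) = 81 :=
  Model.card ▸ (Nat.card_congr <| Equiv.mk ofModel toModel leftInverse_toModel_ofModel <|
    leftInverse_toModel_ofModel.rightInverse_of_surjective ofModel_surjective).symm

end Stmt13
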